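/- SG(2k) = 2, and SG(a_m) = 2 and SG(c_m) = 2 for every natural number m ≥ 0, where SG is the Sprague–Grundy function of the game i-Mark({2},{k}) with k ≡ 1 (mod 4), k > 1. -/
import Mathlib


/-- The minimum excludant of a finite set of naturals. -/
noncomputable def mex (s : Finset ℕ) : ℕ := sInf {x : ℕ | x ∉ s}

/-- Sprague–Grundy function of the game i-Mark({2},{k}):
from a pile of `n ≥ 2` tokens one may subtract `2`,
or replace a positive pile size `n` divisible by `k` by `n / k`. -/
noncomputable def sg (k : ℕ) (hk : 2 ≤ k) (n : ℕ) : ℕ :=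
  mex ((if h : 2 ≤ n then {sg k hk (n - 2)} else ∅) ∪
       (if h : 0 < n ∧ k ∣ n then {sg k hk (n / k)} else ∅))
termination_by n
decreasing_by
  · omega
  · exact Nat.div_lt_self h.1 hk

/-- The sequence `c_0 = 4k`, `c_m = k(c_{m−1} + 2)`. -/
def c (k : ℕ) : ℕ → ℕ
  | 0 => 4 * k
  | m + 1 => k * (c k m + 2)

/-- The sequence `a_0 = k`, `a_m = k(a_{m−1} + 2)`. -/
def a (k : ℕ) : ℕ → ℕ
  | 0 => k
  | m + 1 => k * (a k m + 2)

/-! ### mex lemmas -/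

lemma mex_eq_of {s : Finset ℕ} {n : ℕ} (h1 : n ∉ s) (h2 : ∀ m, m < n → m ∈ s) : mex s = n := by
  refine le_antisymm (Nat.sInf_le h1) ?_
  by_contra h
  push_neg at h
  exact (Nat.sInf_mem (⟨n, h1⟩ : Set.Nonempty {x : ℕ | x ∉ s})) (h2 _ h)

lemma mex_empty : mex (∅ : Finset ℕ) = 0 := mex_eq_of (by simp) (by omega)

lemma mex_singleton (x : ℕ) : mex {x} = if x = 0 then 1 else 0 := by
  split_ifs with h
  · subst h; exact mex_eq_of (by simp) (by intro m hm; interval_cases m; simp)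
  · exact mex_eq_of (by simp [Ne.symm h]) (by omega)

lemma mex_pair_ne (x y v : ℕ) (hv : v = if x = 0 then 1 else 0) (hy : y ≠ v) :
    mex {x, y} = v := by
  split_ifs at hv with h
  · subst hv; subst h
    refine mex_eq_of (by simp [Ne.symm hy]) ?_
    intro m hm; interval_cases m; simp
  · subst hv
    exact mex_eq_of (by simp [Ne.symm h, Ne.symm hy]) (by omega)

lemma mex_pair2 (x y : ℕ) (h : x = 0 ∧ y = 1 ∨ x = 1 ∧ y = 0) : mex {x, y} = 2 := by
  rcases h with ⟨rfl, rfl⟩ | ⟨rfl, rfl⟩ <;>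
  · refine mex_eq_of (by simp) ?_
    intro m hm; interval_cases m <;> simp

/-! ### Special positions and the closed-form function phi -/

def Special (k : ℕ) (n : ℕ) : Prop :=
  n = 2 * k ∨ (∃ m, n = a k m) ∨ (∃ m, n = c k m)

open Classical in
noncomputable def phi (k : ℕ) (n : ℕ) : ℕ :=
  if Special k n then 2
  else if h : 2 ≤ n then (if phi k (n - 2) = 0 then 1 else 0) else 0
termination_by n
decreasing_by omega

lemma phi_special {k n : ℕ} (h : Special k n) : phi k n = 2 := by
  rw [phi, if_pos h]

lemma phi_step {k n : ℕ} (h : ¬ Special k n) (h2 : 2 ≤ n) :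
    phi k n = if phi k (n - 2) = 0 then 1 else 0 := by
  rw [phi, if_neg h, dif_pos h2]

lemma phi_small {k n : ℕ} (h : ¬ Special k n) (h2 : n < 2) : phi k n = 0 := by
  rw [phi, if_neg h, dif_neg (by omega)]

/-! ### Arithmetic facts about the sequences -/

section seq
variable {k : ℕ}

lemma a_zero : a k 0 = k := rfl
lemma a_succ (m : ℕ) : a k (m + 1) = k * (a k m + 2) := rfl
lemma c_zero : c k 0 = 4 * k := rfl
lemma c_succ (m : ℕ) : c k (m + 1) = k * (c k m + 2) := rfl

lemma a_ge (m : ℕ) : k ≤ a k m := by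
  induction m with
  | zero => exact le_rfl
  | succ m ih =>
    have h := Nat.mul_le_mul_left k (show 1 ≤ a k m + 2 by omega)
    rw [a_succ]; omega

lemma c_ge (hk1 : 1 < k) (m : ℕ) : 4 * k ≤ c k m := by
  induction m with
  | zero => exact le_rfl
  | succ m ih =>
    have h := Nat.mul_le_mul_left k (show 4 ≤ c k m + 2 by omega)
    rw [c_succ]; omega

lemma a_lt_succ (hk1 : 1 < k) (m : ℕ) : a k m < a k (m + 1) := by
  have h := Nat.mul_le_mul_right (a k m + 2) (show 2 ≤ k by omega)
  rw [a_succ]; omega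

lemma c_lt_succ (hk1 : 1 < k) (m : ℕ) : c k m < c k (m + 1) := by
  have h := Nat.mul_le_mul_right (c k m + 2) (show 2 ≤ k by omega)
  rw [c_succ]; omega

lemma a_mono (hk1 : 1 < k) : StrictMono (a k) :=
  strictMono_nat_of_lt_succ (a_lt_succ hk1)

lemma c_mono (hk1 : 1 < k) : StrictMono (c k) :=
  strictMono_nat_of_lt_succ (c_lt_succ hk1)

lemma a_unb (hk1 : 1 < k) (m : ℕ) : m + k ≤ a k m := by
  induction m with
  | zero => rw [a_zero]; omega
  | succ m ih => have := a_lt_succ hk1 m; omega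

lemma c_unb (hk1 : 1 < k) (m : ℕ) : m + 4 * k ≤ c k m := by
  induction m with
  | zero => rw [c_zero]; omega
  | succ m ih => have := c_lt_succ hk1 m; omega

lemma a_odd (hk2 : k % 2 = 1) (m : ℕ) : a k m % 2 = 1 := by
  induction m with
  | zero => exact hk2
  | succ m ih =>
    rw [a_succ]
    have h := Nat.mul_mod k (a k m + 2) 2
    rw [hk2] at h
    omega

lemma c_even (hk2 : k % 2 = 1) (m : ℕ) : c k m % 2 = 0 := by
  induction m with
  | zero => rw [c_zero]; omega
  | succ m ih =>
    rw [c_succ]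
    have h := Nat.mul_mod k (c k m + 2) 2
    rw [hk2] at h
    omega

lemma k_dvd_a (m : ℕ) : k ∣ a k m := by
  cases m with
  | zero => exact dvd_refl k
  | succ m => exact Dvd.intro _ rfl

lemma k_dvd_c (m : ℕ) : k ∣ c k m := by
  cases m with
  | zero => exact ⟨4, by rw [c_zero]; ring⟩
  | succ m => exact Dvd.intro _ rfl

lemma special_dvd {n : ℕ} (hk1 : 1 < k) (h : Special k n) : 0 < n ∧ k ∣ n := by
  rcases h with rfl | ⟨m, rfl⟩ | ⟨m, rfl⟩
  · exact ⟨by omega, Dvd.intro 2 (by ring)⟩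
  · exact ⟨by have := a_ge (k := k) m; omega, k_dvd_a m⟩
  · exact ⟨by have := c_ge hk1 m; omega, k_dvd_c m⟩

lemma existsBetween (f : ℕ → ℕ) (hmono : ∀ m, f m < f (m + 1))
    (hunb : ∀ m, m ≤ f m) {t : ℕ} (ht : f 0 ≤ t) :
    ∃ m, f m ≤ t ∧ t < f (m + 1) := by
  classical
  have hex : ∃ i, t < f i := ⟨t + 1, lt_of_lt_of_le (by omega) (hunb (t + 1))⟩
  have hi : t < f (Nat.find hex) := Nat.find_spec hex
  have hi0 : Nat.find hex ≠ 0 := by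
    intro h; rw [h] at hi; omega
  obtain ⟨m, hm⟩ : ∃ m, Nat.find hex = m + 1 := ⟨Nat.find hex - 1, by omega⟩
  refine ⟨m, ?_, by rw [← hm]; exact hi⟩
  have := Nat.find_min hex (show m < Nat.find hex by omega)
  omega

/-! ### Non-speciality of interval interiors -/

lemma ns_odd_small (hk1 : 1 < k) {n : ℕ} (h2 : n % 2 = 1) (h3 : n < k) :
    ¬ Special k n := by
  rintro (rfl | ⟨m, rfl⟩ | ⟨m, rfl⟩)
  · omega
  · have := a_ge (k := k) m; omega
  · have := c_ge hk1 m; omega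

lemma ns_odd_mid (hk1 : 1 < k) (hk2 : k % 2 = 1) {n m : ℕ} (h2 : n % 2 = 1)
    (hlo : a k m < n) (hhi : n < a k (m + 1)) : ¬ Special k n := by
  rintro (rfl | ⟨i, rfl⟩ | ⟨i, rfl⟩)
  · omega
  · rcases le_or_gt i m with h | h
    · have := (a_mono hk1).monotone h; omega
    · have := (a_mono hk1).monotone (show m + 1 ≤ i by omega); omega
  · have := c_even hk2 i; omega

lemma ns_even_small (hk1 : 1 < k) (hk2 : k % 2 = 1) {n : ℕ} (h2 : n % 2 = 0)
    (h3 : n < 2 * k) : ¬ Special k n := by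
  rintro (rfl | ⟨m, rfl⟩ | ⟨m, rfl⟩)
  · omega
  · have := a_odd hk2 m; omega
  · have := c_ge hk1 m; omega

lemma ns_even_mid (hk1 : 1 < k) (hk2 : k % 2 = 1) {n : ℕ} (h2 : n % 2 = 0)
    (hlo : 2 * k < n) (hhi : n < 4 * k) : ¬ Special k n := by
  rintro (rfl | ⟨m, rfl⟩ | ⟨m, rfl⟩)
  · omega
  · have := a_odd hk2 m; omega
  · have := c_ge hk1 m; omega

lemma ns_even_big (hk1 : 1 < k) (hk2 : k % 2 = 1) {n m : ℕ} (h2 : n % 2 = 0)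
    (hlo : c k m < n) (hhi : n < c k (m + 1)) : ¬ Special k n := by
  rintro (rfl | ⟨i, rfl⟩ | ⟨i, rfl⟩)
  · have := c_ge hk1 m; omega
  · have := a_odd hk2 i; omega
  · rcases le_or_gt i m with h | h
    · have := (c_mono hk1).monotone h; omega
    · have := (c_mono hk1).monotone (show m + 1 ≤ i by omega); omega

/-! ### Closed forms for phi on the intervals -/

lemma L1 (hk1 : 1 < k) (hk2 : k % 2 = 1) :
    ∀ j, 2 * j + 1 < k → phi k (2 * j + 1) = j % 2 := by
  intro j
  induction j with
  | zero =>
    intro h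
    rw [phi_small (ns_odd_small hk1 (by omega) (by omega)) (by omega)]
  | succ j ih =>
    intro h
    have h1 : 2 * j + 1 < k := by omega
    rw [show 2 * (j + 1) + 1 = (2 * j + 1) + 2 by omega,
      phi_step (ns_odd_small hk1 (by omega) (by omega)) (by omega)]
    rw [show 2 * j + 1 + 2 - 2 = 2 * j + 1 by omega, ih h1]
    rcases Nat.mod_two_eq_zero_or_one j with h0 | h0 <;> simp [h0] <;> omega

lemma L2 (hk1 : 1 < k) (hk2 : k % 2 = 1) (m : ℕ) :
    ∀ j, 1 ≤ j → a k m + 2 * j < a k (m + 1) → phi k (a k m + 2 * j) = (j + 1) % 2 := by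
  intro j hj
  induction j, hj using Nat.le_induction with
  | base =>
    intro hb
    have ha := a_odd hk2 m
    have hlt : a k m < a k m + 2 * 1 := by omega
    rw [phi_step (ns_odd_mid hk1 hk2 (by omega) hlt hb) (by omega)]
    rw [show a k m + 2 * 1 - 2 = a k m by omega,
      phi_special (Or.inr (Or.inl ⟨m, rfl⟩))]
    norm_num
  | succ j hj ih =>
    intro hb
    have ha := a_odd hk2 m
    have h1 : a k m + 2 * j < a k (m + 1) := by omega
    have hb' : a k m + 2 * j + 2 < a k (m + 1) := by omega
    rw [show a k m + 2 * (j + 1) = (a k m + 2 * j) + 2 by omega,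
      phi_step (ns_odd_mid hk1 hk2 (by omega) (by omega) hb') (by omega)]
    rw [show a k m + 2 * j + 2 - 2 = a k m + 2 * j by omega, ih h1]
    rcases Nat.mod_two_eq_zero_or_one j with h0 | h0 <;> simp [Nat.add_mod j 1 2, h0] <;> omega

lemma L3 (hk1 : 1 < k) (hk2 : k % 2 = 1) :
    ∀ j, 2 * j < 2 * k → phi k (2 * j) = j % 2 := by
  intro j
  induction j with
  | zero =>
    intro h
    rw [phi_small (ns_even_small hk1 hk2 (by omega) (by omega)) (by omega)]
  | succ j ih =>
    intro h
    have h1 : 2 * j < 2 * k := by omega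
    rw [show 2 * (j + 1) = (2 * j) + 2 by omega,
      phi_step (ns_even_small hk1 hk2 (by omega) (by omega)) (by omega)]
    rw [show 2 * j + 2 - 2 = 2 * j by omega, ih h1]
    rcases Nat.mod_two_eq_zero_or_one j with h0 | h0 <;> simp [h0] <;> omega

lemma L4 (hk1 : 1 < k) (hk2 : k % 2 = 1) :
    ∀ j, 1 ≤ j → 2 * k + 2 * j < 4 * k → phi k (2 * k + 2 * j) = (j + 1) % 2 := by
  intro j hj
  induction j, hj using Nat.le_induction with
  | base =>
    intro hb
    rw [phi_step (ns_even_mid hk1 hk2 (by omega) (by omega) hb) (by omega)]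
    rw [show 2 * k + 2 * 1 - 2 = 2 * k by omega, phi_special (Or.inl rfl)]
    norm_num
  | succ j hj ih =>
    intro hb
    have h1 : 2 * k + 2 * j < 4 * k := by omega
    have hb' : 2 * k + 2 * j + 2 < 4 * k := by omega
    rw [show 2 * k + 2 * (j + 1) = (2 * k + 2 * j) + 2 by omega,
      phi_step (ns_even_mid hk1 hk2 (by omega) (by omega) hb') (by omega)]
    rw [show 2 * k + 2 * j + 2 - 2 = 2 * k + 2 * j by omega, ih h1]
    rcases Nat.mod_two_eq_zero_or_one j with h0 | h0 <;> simp [Nat.add_mod j 1 2, h0] <;> omega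

lemma L5 (hk1 : 1 < k) (hk2 : k % 2 = 1) (m : ℕ) :
    ∀ j, 1 ≤ j → c k m + 2 * j < c k (m + 1) → phi k (c k m + 2 * j) = (j + 1) % 2 := by
  intro j hj
  induction j, hj using Nat.le_induction with
  | base =>
    intro hb
    have hc := c_even hk2 m
    rw [phi_step (ns_even_big hk1 hk2 (by omega) (by omega) hb) (by omega)]
    rw [show c k m + 2 * 1 - 2 = c k m by omega,
      phi_special (Or.inr (Or.inr ⟨m, rfl⟩))]
    norm_num
  | succ j hj ih =>
    intro hb
    have hc := c_even hk2 m
    have h1 : c k m + 2 * j < c k (m + 1) := by omega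
    have hb' : c k m + 2 * j + 2 < c k (m + 1) := by omega
    rw [show c k m + 2 * (j + 1) = (c k m + 2 * j) + 2 by omega,
      phi_step (ns_even_big hk1 hk2 (by omega) (by omega) hb') (by omega)]
    rw [show c k m + 2 * j + 2 - 2 = c k m + 2 * j by omega, ih h1]
    rcases Nat.mod_two_eq_zero_or_one j with h0 | h0 <;> simp [Nat.add_mod j 1 2, h0] <;> omega

end seq

lemma odd_mul_mod {k : ℕ} (hk2 : k % 2 = 1) (x : ℕ) : (k * x) % 2 = x % 2 := by
  have h := Nat.mul_mod k x 2
  rw [hk2, one_mul] at h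
  omega


lemma kmul_lt_kmul {k t s : ℕ} (hk : 0 < k) (h : t < s) : k * t < k * s := by
  have h2 := Nat.mul_le_mul_left k (show t + 1 ≤ s by omega)
  have h3 : k * (t + 1) = k * t + k := by ring
  omega

lemma key_ns {k t : ℕ} (hns : ¬ Special k (k * t)) (h2 : 2 ≤ k * t)
    (hne : phi k t ≠ phi k (k * t)) :
    mex {phi k (k * t - 2), phi k t} = phi k (k * t) :=
  mex_pair_ne _ _ _ (phi_step hns h2) hne

lemma key (k : ℕ) (hk4 : k % 4 = 1) (hk1 : 1 < k) (t : ℕ) (ht : 1 ≤ t) :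
    mex {phi k (k * t - 2), phi k t} = phi k (k * t) := by
  have hk5 : 5 ≤ k := by omega
  have hk2 : k % 2 = 1 := by omega
  obtain ⟨q, hq⟩ : ∃ q, k = 4 * q + 1 := ⟨k / 4, by omega⟩
  have hq1 : 1 ≤ q := by omega
  have ha0 : a k 0 = k := a_zero
  have hc0 : c k 0 = 4 * k := c_zero
  rcases Nat.mod_two_eq_zero_or_one t with hpar | hpar
  · -- t even
    rcases lt_or_ge t (2 * k) with htk | htk
    · rcases lt_or_ge t 6 with ht6 | ht6
      · -- t = 2 or t = 4
        rcases (show t = 2 ∨ t = 4 by omega) with rfl | rfl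
        · -- t = 2 : k*2 = 2k is special (= b)
          have hsp : Special k (k * 2) := Or.inl (by ring)
          rw [phi_special hsp]
          have hx : phi k (k * 2 - 2) = 0 := by
            rw [show k * 2 - 2 = 2 * (k - 1) by omega, L3 hk1 hk2 (k - 1) (by omega)]
            omega
          have hy : phi k 2 = 1 := by
            have := L3 hk1 hk2 1 (by omega); norm_num at this; exact this
          rw [hx, hy]
          exact mex_pair2 0 1 (Or.inl ⟨rfl, rfl⟩)
        · -- t = 4 : k*4 = c_0 is special
          have hsp : Special k (k * 4) := Or.inr (Or.inr ⟨0, by rw [c_zero]; ring⟩)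
          rw [phi_special hsp]
          have hx : phi k (k * 4 - 2) = 1 := by
            rw [show k * 4 - 2 = 2 * k + 2 * (k - 1) by omega,
              L4 hk1 hk2 (k - 1) (by omega) (by omega)]
            omega
          have hy : phi k 4 = 0 := by
            have := L3 hk1 hk2 2 (by omega); norm_num at this; exact this
          rw [hx, hy]
          exact mex_pair2 1 0 (Or.inr ⟨rfl, rfl⟩)
      · -- 6 ≤ t < 2k even
        obtain ⟨j, hjeq⟩ : ∃ j, t = 2 * (j + 3) := ⟨t / 2 - 3, by omega⟩
        have hy : phi k t = (j + 3) % 2 := by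
          have := L3 hk1 hk2 (j + 3) (by omega)
          rw [← hjeq] at this; exact this
        have hid : k * t = c k 0 + 2 * (k * (j + 1)) := by rw [hjeq, c_zero]; ring
        have hc1 : c k (0 + 1) = k * (4 * k + 2) := by rw [c_succ, c_zero]
        have hlt : k * t < c k (0 + 1) := by
          rw [hc1]; exact kmul_lt_kmul (by omega) (by omega)
        have hpos : 0 < k * (j + 1) := Nat.mul_pos (by omega) (by omega)
        have hv : phi k (k * t) = (k * (j + 1) + 1) % 2 := by
          rw [hid]; exact L5 hk1 hk2 0 (k * (j + 1)) hpos (by omega)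
        have hkj := odd_mul_mod hk2 (j + 1)
        have hkt := odd_mul_mod hk2 t
        have hns : ¬ Special k (k * t) :=
          ns_even_big hk1 hk2 (by omega) (show c k 0 < k * t by omega) (by omega)
        exact key_ns hns (by omega) (by rw [hy, hv]; omega)
    · rcases lt_or_ge t (4 * k) with htk4 | htk4
      · obtain ⟨u, hu⟩ : ∃ u, k = u + 2 := ⟨k - 2, by omega⟩
        rcases eq_or_lt_of_le htk with he | hlt2
        · -- t = 2k : phi t = 2
          subst he
          have hy : phi k (2 * k) = 2 := phi_special (Or.inl rfl)
          have hid : k * (2 * k) = c k 0 + 2 * (k * u) := by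
            rw [c_zero, hu]; ring
          have hc1 : c k (0 + 1) = k * (4 * k + 2) := by rw [c_succ, c_zero]
          have hlt : k * (2 * k) < c k (0 + 1) := by
            rw [hc1]; exact kmul_lt_kmul (by omega) (by omega)
          have hpos : 0 < k * u := Nat.mul_pos (by omega) (by omega)
          have hv : phi k (k * (2 * k)) = (k * u + 1) % 2 := by
            rw [hid]; exact L5 hk1 hk2 0 (k * u) hpos (by omega)
          have hku := odd_mul_mod hk2 u
          have hns : ¬ Special k (k * (2 * k)) :=
            ns_even_big hk1 hk2 (by rw [hid]; omega) (show c k 0 < k * (2 * k) by omega) (by omega)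
          exact key_ns hns (by omega) (by rw [hy, hv]; omega)
        · -- 2k < t < 4k even
          obtain ⟨j, hjeq⟩ : ∃ j, t = 2 * k + 2 * (j + 1) := ⟨(t - 2 * k) / 2 - 1, by omega⟩
          have hy : phi k t = (j + 2) % 2 := by
            have := L4 hk1 hk2 (j + 1) (by omega) (by omega)
            rw [← hjeq] at this; exact this
          have hid : k * t = c k 0 + 2 * (k * (u + j + 1)) := by
            rw [hjeq, c_zero, hu]; ring
          have hc1 : c k (0 + 1) = k * (4 * k + 2) := by rw [c_succ, c_zero]
          have hlt : k * t < c k (0 + 1) := by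
            rw [hc1]; exact kmul_lt_kmul (by omega) (by omega)
          have hpos : 0 < k * (u + j + 1) := Nat.mul_pos (by omega) (by omega)
          have hv : phi k (k * t) = (k * (u + j + 1) + 1) % 2 := by
            rw [hid]; exact L5 hk1 hk2 0 (k * (u + j + 1)) hpos (by omega)
          have hku := odd_mul_mod hk2 (u + j + 1)
          have hkt := odd_mul_mod hk2 t
          have hns : ¬ Special k (k * t) :=
            ns_even_big hk1 hk2 (by omega) (show c k 0 < k * t by omega) (by omega)
          exact key_ns hns (by omega) (by rw [hy, hv]; omega)
      · -- 4k ≤ t, even: between c m and c (m+1)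
        obtain ⟨m, hm1, hm2⟩ :=
          existsBetween (c k) (c_lt_succ hk1) (fun m => by have := c_unb hk1 m; omega)
            (t := t) (by rw [c_zero]; exact htk4)
        have hcm := c_even hk2 m
        have hsucc : c k (m + 1) = k * c k m + 2 * k := by rw [c_succ]; ring
        have hcmge := c_ge hk1 m
        rcases eq_or_lt_of_le hm1 with he | hlt2
        · -- t = c m
          subst he
          have hy : phi k (c k m) = 2 := phi_special (Or.inr (Or.inr ⟨m, rfl⟩))
          have hid : k * c k m = c k m + 2 * (2 * q * c k m) := by rw [hq]; ring
          have hJ2 : (2 * q * c k m) % 2 = 0 := by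
            have : 2 * q * c k m = 2 * (q * c k m) := by ring
            omega
          have hpos : 0 < 2 * q * c k m := Nat.mul_pos (by omega) (by omega)
          have hv : phi k (k * c k m) = 1 := by
            rw [hid, L5 hk1 hk2 m _ hpos (by omega)]; omega
          have hns : ¬ Special k (k * c k m) :=
            ns_even_big hk1 hk2 (by rw [hid]; omega) (show c k m < k * c k m by omega)
              (by omega)
          exact key_ns hns (by omega) (by rw [hy, hv]; omega)
        · -- c m < t < c (m+1)
          obtain ⟨j, hjeq⟩ : ∃ j, t = c k m + 2 * (j + 1) := ⟨(t - c k m) / 2 - 1, by omega⟩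
          have hy : phi k t = (j + 2) % 2 := by
            have := L5 hk1 hk2 m (j + 1) (by omega) (by omega)
            rw [← hjeq] at this; exact this
          rcases Nat.eq_zero_or_pos j with rfl | hj1
          · -- j = 0 : k*t = c (m+1), special
            have hkt : k * t = c k (m + 1) := by rw [hjeq, c_succ]
            rw [hkt, phi_special (Or.inr (Or.inr ⟨m + 1, rfl⟩))]
            have hidx : c k (m + 1) = c k m + 2 * (2 * q * (c k m + 2)) + 2 := by
              rw [c_succ, hq]; ring
            have hJ2 : (2 * q * (c k m + 2)) % 2 = 0 := by
              have : 2 * q * (c k m + 2) = 2 * (q * (c k m + 2)) := by ring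
              omega
            have hpos : 0 < 2 * q * (c k m + 2) := Nat.mul_pos (by omega) (by omega)
            have hx : phi k (c k (m + 1) - 2) = 1 := by
              rw [show c k (m + 1) - 2 = c k m + 2 * (2 * q * (c k m + 2)) by omega,
                L5 hk1 hk2 m _ hpos (by omega)]
              omega
            rw [hx, hy]
            exact mex_pair2 1 0 (Or.inr ⟨rfl, rfl⟩)
          · -- j ≥ 1
            have hid : k * t = c k (m + 1) + 2 * (k * j) := by rw [hjeq, c_succ]; ring
            have hc2 : c k (m + 1 + 1) = k * (c k (m + 1) + 2) := rfl
            have hlt : k * t < c k (m + 1 + 1) := by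
              rw [hc2]; exact kmul_lt_kmul (by omega) (by omega)
            have hpos : 0 < k * j := Nat.mul_pos (by omega) (by omega)
            have hv : phi k (k * t) = (k * j + 1) % 2 := by
              rw [hid]; exact L5 hk1 hk2 (m + 1) (k * j) hpos (by omega)
            have hkj := odd_mul_mod hk2 j
            have hkt := odd_mul_mod hk2 t
            have hns : ¬ Special k (k * t) :=
              ns_even_big hk1 hk2 (by omega) (show c k (m + 1) < k * t by omega) (by omega)
            exact key_ns hns (by omega) (by rw [hy, hv]; omega)
  · -- t odd
    rcases lt_or_ge t k with htk | htk
    · rcases eq_or_lt_of_le ht with he | ht3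
      · -- t = 1 : k*1 = a 0, special
        subst he
        have hsp : Special k (k * 1) := Or.inr (Or.inl ⟨0, by rw [a_zero, mul_one]⟩)
        have hx : phi k (k * 1 - 2) = 1 := by
          rw [show k * 1 - 2 = 2 * ((k - 3) / 2) + 1 by omega,
            L1 hk1 hk2 ((k - 3) / 2) (by omega)]
          omega
        have hy : phi k 1 = 0 := by
          have := L1 hk1 hk2 0 (by omega); norm_num at this; exact this
        rw [phi_special hsp, hx, hy]
        exact mex_pair2 1 0 (Or.inr ⟨rfl, rfl⟩)
      · -- 3 ≤ t < k odd
        obtain ⟨j, hjeq⟩ : ∃ j, t = 2 * (j + 1) + 1 := ⟨(t - 1) / 2 - 1, by omega⟩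
        have hy : phi k t = (j + 1) % 2 := by
          have := L1 hk1 hk2 (j + 1) (by omega)
          rw [← hjeq] at this; exact this
        have hid : k * t = a k 0 + 2 * (k * (j + 1)) := by rw [hjeq, a_zero]; ring
        have ha1 : a k (0 + 1) = k * (k + 2) := by rw [a_succ, a_zero]
        have hlt : k * t < a k (0 + 1) := by
          rw [ha1]; exact kmul_lt_kmul (by omega) (by omega)
        have hpos : 0 < k * (j + 1) := Nat.mul_pos (by omega) (by omega)
        have hv : phi k (k * t) = (k * (j + 1) + 1) % 2 := by
          rw [hid]; exact L2 hk1 hk2 0 (k * (j + 1)) hpos (by omega)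
        have hkj := odd_mul_mod hk2 (j + 1)
        have hkt := odd_mul_mod hk2 t
        have hns : ¬ Special k (k * t) :=
          ns_odd_mid hk1 hk2 (by omega) (show a k 0 < k * t by omega) (by omega)
        exact key_ns hns (by omega) (by rw [hy, hv]; omega)
    · -- k ≤ t odd: between a m and a (m+1)
      obtain ⟨m, hm1, hm2⟩ :=
        existsBetween (a k) (a_lt_succ hk1) (fun m => by have := a_unb hk1 m; omega)
          (t := t) (by rw [a_zero]; exact htk)
      have ham := a_odd hk2 m
      have hsucc : a k (m + 1) = k * a k m + 2 * k := by rw [a_succ]; ring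
      have hamge := a_ge (k := k) m
      rcases eq_or_lt_of_le hm1 with he | hlt2
      · -- t = a m
        subst he
        have hy : phi k (a k m) = 2 := phi_special (Or.inr (Or.inl ⟨m, rfl⟩))
        have hid : k * a k m = a k m + 2 * (2 * q * a k m) := by rw [hq]; ring
        have hJ2 : (2 * q * a k m) % 2 = 0 := by
          have : 2 * q * a k m = 2 * (q * a k m) := by ring
          omega
        have hpos : 0 < 2 * q * a k m := Nat.mul_pos (by omega) (by omega)
        have hv : phi k (k * a k m) = 1 := by
          rw [hid, L2 hk1 hk2 m _ hpos (by omega)]; omega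
        have hodd := a_odd hk2 m
        have hns : ¬ Special k (k * a k m) :=
          ns_odd_mid hk1 hk2 (by rw [hid]; omega) (show a k m < k * a k m by omega)
            (by omega)
        exact key_ns hns (by omega) (by rw [hy, hv]; omega)
      · -- a m < t < a (m+1)
        obtain ⟨j, hjeq⟩ : ∃ j, t = a k m + 2 * (j + 1) := ⟨(t - a k m) / 2 - 1, by omega⟩
        have hy : phi k t = (j + 2) % 2 := by
          have := L2 hk1 hk2 m (j + 1) (by omega) (by omega)
          rw [← hjeq] at this; exact this
        rcases Nat.eq_zero_or_pos j with rfl | hj1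
        · -- j = 0 : k*t = a (m+1), special
          have hkt : k * t = a k (m + 1) := by rw [hjeq, a_succ]
          rw [hkt, phi_special (Or.inr (Or.inl ⟨m + 1, rfl⟩))]
          have hidx : a k (m + 1) = a k m + 2 * (2 * q * (a k m + 2)) + 2 := by
            rw [a_succ, hq]; ring
          have hJ2 : (2 * q * (a k m + 2)) % 2 = 0 := by
            have : 2 * q * (a k m + 2) = 2 * (q * (a k m + 2)) := by ring
            omega
          have hpos : 0 < 2 * q * (a k m + 2) := Nat.mul_pos (by omega) (by omega)
          have hx : phi k (a k (m + 1) - 2) = 1 := by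
            rw [show a k (m + 1) - 2 = a k m + 2 * (2 * q * (a k m + 2)) by omega,
              L2 hk1 hk2 m _ hpos (by omega)]
            omega
          rw [hx, hy]
          exact mex_pair2 1 0 (Or.inr ⟨rfl, rfl⟩)
        · -- j ≥ 1
          have hid : k * t = a k (m + 1) + 2 * (k * j) := by rw [hjeq, a_succ]; ring
          have ha2 : a k (m + 1 + 1) = k * (a k (m + 1) + 2) := rfl
          have hlt : k * t < a k (m + 1 + 1) := by
            rw [ha2]; exact kmul_lt_kmul (by omega) (by omega)
          have hpos : 0 < k * j := Nat.mul_pos (by omega) (by omega)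
          have hv : phi k (k * t) = (k * j + 1) % 2 := by
            rw [hid]; exact L2 hk1 hk2 (m + 1) (k * j) hpos (by omega)
          have hkj := odd_mul_mod hk2 j
          have hkt := odd_mul_mod hk2 t
          have hns : ¬ Special k (k * t) :=
            ns_odd_mid hk1 hk2 (by omega) (show a k (m + 1) < k * t by omega) (by omega)
          exact key_ns hns (by omega) (by rw [hy, hv]; omega)

lemma sg_eq_phi (k : ℕ) (hk4 : k % 4 = 1) (hk1 : 1 < k) (hk2 : 2 ≤ k) :
    ∀ n, sg k hk2 n = phi k n := by
  intro n
  induction n using Nat.strong_induction_on with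
  | _ n IH =>
  rw [sg]
  by_cases h2 : 2 ≤ n
  · by_cases hd : 0 < n ∧ k ∣ n
    · obtain ⟨t, rfl⟩ := hd.2
      have ht1 : 1 ≤ t := by
        rcases Nat.eq_zero_or_pos t with rfl | h
        · simp at hd
        · exact h
      rw [dif_pos h2, dif_pos hd, ← Finset.insert_eq]
      have e1 : k * t / k = t := Nat.mul_div_cancel_left _ (show 0 < k by omega)
      have htlt : t < k * t := by
        have h := Nat.mul_le_mul_right t hk2
        omega
      rw [e1, IH (k * t - 2) (by omega), IH t htlt]
      exact key k hk4 hk1 t ht1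
    · rw [dif_pos h2, dif_neg hd, Finset.union_empty,
        IH (n - 2) (by omega)]
      have hns : ¬ Special k n := fun h => hd (special_dvd hk1 h)
      rw [mex_singleton, phi_step hns h2]
  · rw [dif_neg h2, dif_neg (by
        rintro ⟨h0, hdvd⟩
        have := Nat.le_of_dvd h0 hdvd
        omega), Finset.union_empty, mex_empty]
    have hns : ¬ Special k n := by
      intro h
      have h3 := special_dvd hk1 h
      have := Nat.le_of_dvd h3.1 h3.2
      omega
    rw [phi_small hns (by omega)]


theorem sg_b_a_c (k : ℕ) (hk : k % 4 = 1) (hk1 : 1 < k) :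
    sg k (by omega) (2 * k) = 2 ∧
    (∀ m : ℕ, sg k (by omega) (a k m) = 2) ∧
    (∀ m : ℕ, sg k (by omega) (c k m) = 2) := by
  refine ⟨?_, fun m => ?_, fun m => ?_⟩
  · rw [sg_eq_phi k hk hk1 (by omega)]
    exact phi_special (Or.inl rfl)
  · rw [sg_eq_phi k hk hk1 (by omega)]
    exact phi_special (Or.inr (Or.inl ⟨m, rfl⟩))
  · rw [sg_eq_phi k hk hk1 (by omega)]
    exact phi_special (Or.inr (Or.inr ⟨m, rfl⟩))
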